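/- Let D₁ be an annotation domain that is a lattice and D₂ an annotation domain. For a finite set A ⊆ L₁ × L₂ and a pair (a, b) ∈ A with a = ⊥₁ or b = ⊥₂, removing (a,b) does not change the induced function: for all z ∈ L₁, Ā(z) = (A \ {(a,b)})‾(z). -/

import Mathlib

/-- An annotation domain: an idempotent commutative semiring
`(L, ⊕, ⊗, ⊥, ⊤)` in which `⊕` is `⊤`-annihilating. -/
structure AnnDom (L : Type*) where
  oplus : L → L → L
  otimes : L → L → L
  bot : L
  top : L
  oplus_idem : ∀ a, oplus a a = a
  oplus_comm : ∀ a b, oplus a b = oplus b a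
  oplus_assoc : ∀ a b c, oplus (oplus a b) c = oplus a (oplus b c)
  otimes_comm : ∀ a b, otimes a b = otimes b a
  otimes_assoc : ∀ a b c, otimes (otimes a b) c = otimes a (otimes b c)
  bot_oplus : ∀ a, oplus bot a = a
  top_otimes : ∀ a, otimes top a = a
  bot_otimes : ∀ a, otimes bot a = bot
  top_oplus : ∀ a, oplus top a = top
  otimes_distrib : ∀ a b c, otimes a (oplus b c) = oplus (otimes a b) (otimes a c)

/-- The induced order: `a ⪯ b` iff `a ⊕ b = b`. -/
def AnnDom.le {L : Type*} (D : AnnDom L) (a b : L) : Prop := D.oplus a b = b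


/-- The annotation domain is a lattice: `⊗` is the greatest lower bound of
the induced order `⪯`. -/
def AnnDom.IsLattice {L : Type*} (D : AnnDom L) : Prop :=
  ∀ a b c, (D.le c a ∧ D.le c b) ↔ D.le c (D.otimes a b)


open Classical in
/-- The join `⊕₁` of the first coordinates of the pairs in `J` (`⊥₁` if empty). -/
noncomputable def joinFst {L1 L2 : Type*} (D1 : AnnDom L1) (J : Finset (L1 × L2)) : L1 :=
  haveI : Std.Commutative D1.oplus := ⟨D1.oplus_comm⟩
  haveI : Std.Associative D1.oplus := ⟨D1.oplus_assoc⟩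
  J.fold D1.oplus D1.bot Prod.fst

open Classical in
/-- `K^A_z = {J ⊆ A | z ⪯₁ ⊕₁_{(x,y)∈J} x}`. -/
noncomputable def Kset {L1 L2 : Type*} (D1 : AnnDom L1) (A : Finset (L1 × L2))
    (z : L1) : Finset (Finset (L1 × L2)) :=
  A.powerset.filter (fun J => D1.le z (joinFst D1 J))

open Classical in
/-- `Ā(z) = ⊕₂_{J ∈ K^A_z} (⊗₂_{(x,y)∈J} y)` (empty join is `⊥₂`, empty
product is `⊤₂`). -/
noncomputable def Abar {L1 L2 : Type*} (D1 : AnnDom L1) (D2 : AnnDom L2)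
    (A : Finset (L1 × L2)) (z : L1) : L2 :=
  haveI : Std.Commutative D2.oplus := ⟨D2.oplus_comm⟩
  haveI : Std.Associative D2.oplus := ⟨D2.oplus_assoc⟩
  haveI : Std.Commutative D2.otimes := ⟨D2.otimes_comm⟩
  haveI : Std.Associative D2.otimes := ⟨D2.otimes_assoc⟩
  (Kset D1 A z).fold D2.oplus D2.bot (fun J => J.fold D2.otimes D2.top Prod.snd)

/-! Split `K^A_z` according to whether a subset contains `p = (a, b)`; the subsets
containing `p` are `insert p J` with `J ⊆ A ∖ {p}`, contributing `b ⊗₂ ∏ J`.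
If `b = ⊥₂` these contributions vanish. If `a = ⊥₁`, then `insert p J ∈ K^A_z` iff
`J ∈ K^{A∖{p}}_z`, and `b ⊗₂ ∏ J` is absorbed by `∏ J`, because `⊤₂` annihilates `⊕₂`. -/

namespace AnnDom

variable {L : Type*} (D : AnnDom L)

instance : Std.Commutative D.oplus := ⟨D.oplus_comm⟩
instance : Std.Associative D.oplus := ⟨D.oplus_assoc⟩
instance : Std.IdempotentOp D.oplus := ⟨D.oplus_idem⟩
instance : Std.Commutative D.otimes := ⟨D.otimes_comm⟩
instance : Std.Associative D.otimes := ⟨D.otimes_assoc⟩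

theorem oplus_bot (x : L) : D.oplus x D.bot = x := by
  rw [D.oplus_comm, D.bot_oplus]

theorem otimes_top (x : L) : D.otimes x D.top = x := by
  rw [D.otimes_comm, D.top_otimes]

theorem oplus_otimes_self (x y : L) : D.oplus x (D.otimes x y) = x :=
  calc D.oplus x (D.otimes x y)
      = D.otimes x (D.oplus D.top y) := by rw [D.otimes_distrib, D.otimes_top]
    _ = x := by rw [D.top_oplus, D.otimes_top]

variable {α : Type*}

theorem oplus_fold_otimes_self (s : Finset α) (f : α → L) (c : L) :
    D.oplus (s.fold D.oplus D.bot f) (s.fold D.oplus D.bot fun x => D.otimes c (f x)) =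
      s.fold D.oplus D.bot f := by
  rw [← Finset.fold_op_distrib (op := D.oplus), D.oplus_idem]
  exact Finset.fold_congr fun x _ => by rw [D.otimes_comm, D.oplus_otimes_self]

variable [DecidableEq α]

theorem fold_oplus_union (s t : Finset α) (f : α → L) :
    (s ∪ t).fold D.oplus D.bot f =
      D.oplus (s.fold D.oplus D.bot f) (t.fold D.oplus D.bot f) := by
  induction s using Finset.induction_on with
  | empty => simp [D.bot_oplus]
  | insert x s _ ih => rw [Finset.insert_union, Finset.fold_insert_idem, ih,
      Finset.fold_insert_idem, D.oplus_assoc]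

theorem fold_oplus_eq_bot (s : Finset α) {f : α → L} (hf : ∀ x ∈ s, f x = D.bot) :
    s.fold D.oplus D.bot f = D.bot := by
  rw [Finset.fold_congr hf]
  clear hf
  induction s using Finset.induction_on with
  | empty => rfl
  | insert x s _ ih => rw [Finset.fold_insert_idem, ih, D.oplus_idem]

end AnnDom

open Classical

section Annotation

variable {L1 L2 : Type*} (D1 : AnnDom L1) (D2 : AnnDom L2)

noncomputable def prodSnd (J : Finset (L1 × L2)) : L2 :=
  J.fold D2.otimes D2.top Prod.snd

theorem prodSnd_insert {p : L1 × L2} {J : Finset (L1 × L2)} (hp : p ∉ J) :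
    prodSnd D2 (insert p J) = D2.otimes p.2 (prodSnd D2 J) :=
  Finset.fold_insert (op := D2.otimes) hp

theorem joinFst_insert (p : L1 × L2) (J : Finset (L1 × L2)) :
    joinFst D1 (insert p J) = D1.oplus p.1 (joinFst D1 J) :=
  Finset.fold_insert_idem (op := D1.oplus)

theorem Abar_eq_fold (A : Finset (L1 × L2)) (z : L1) :
    Abar D1 D2 A z = (Kset D1 A z).fold D2.oplus D2.bot (prodSnd D2) :=
  rfl

theorem Abar_insert {p : L1 × L2} {B : Finset (L1 × L2)} (hp : p ∉ B) (z : L1) :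
    Abar D1 D2 (insert p B) z =
      D2.oplus (Abar D1 D2 B z)
        ((B.powerset.filter fun J => D1.le z (D1.oplus p.1 (joinFst D1 J))).fold
          D2.oplus D2.bot fun J => D2.otimes p.2 (prodSnd D2 J)) := by
  rw [Abar_eq_fold, Abar_eq_fold, Kset, Kset, Finset.powerset_insert, Finset.filter_union,
    Finset.filter_image, D2.fold_oplus_union, Finset.fold_image_idem]
  simp only [joinFst_insert]
  congr 1
  exact Finset.fold_congr (op := D2.oplus) fun J hJ =>
    prodSnd_insert D2 fun hpJ => hp (Finset.mem_powerset.1 (Finset.mem_filter.1 hJ).1 hpJ)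

end Annotation

theorem stmt19_general {L1 L2 : Type*} (D1 : AnnDom L1) (D2 : AnnDom L2)
    (A : Finset (L1 × L2)) (a : L1) (b : L2)
    (hab : (a, b) ∈ A) (hbot : a = D1.bot ∨ b = D2.bot) :
    ∀ z : L1, Abar D1 D2 A z = Abar D1 D2 (A.erase (a, b)) z := by
  intro z
  have hsplit := Abar_insert D1 D2 (Finset.notMem_erase (a, b) A) z
  rw [Finset.insert_erase hab] at hsplit
  rw [hsplit]
  rcases hbot with rfl | rfl
  · simp only [D1.bot_oplus]
    exact D2.oplus_fold_otimes_self _ _ _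
  · rw [D2.fold_oplus_eq_bot _ fun J _ => D2.bot_otimes _, D2.oplus_bot]

/-- If `(a,b) ∈ A` with `a = ⊥₁` or `b = ⊥₂`, removing `(a,b)` does not
change the induced function. -/
theorem stmt19 {L1 L2 : Type*} (D1 : AnnDom L1) (D2 : AnnDom L2)
    (hL : D1.IsLattice) (A : Finset (L1 × L2)) (a : L1) (b : L2)
    (hab : (a, b) ∈ A) (hbot : a = D1.bot ∨ b = D2.bot) :
    ∀ z : L1, Abar D1 D2 A z = Abar D1 D2 (A.erase (a, b)) z :=
  stmt19_general D1 D2 A a b hab hbot
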